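/- Let q(x) = f₀ + g₀ᵀ(x − x₀) + ½ (x − x₀)ᵀ H₀ (x − x₀) be a quadratic function on ℝ^K with H₀ symmetric, and let G ⊂ ℝ^K be a grid of points of the form x₀ − r + δ ∘ n for n ∈ {0,...,N}^K covering the hyper-rectangle R = {x : |x_k − x₀_k| ≤ r_k ∀k}, where δ = 2r/N. Then min over x ∈ R of q(x) ≥ (min over grid points of q) − (1/8) λ δᵀδ, where λ = max(λ_max(H₀), 0) and λ_max(H₀) is the largest eigenvalue of H₀. -/

import Mathlib

/-!
Round the coordinates of `x` to the grid one at a time. Along coordinate `j` the model is a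
one-variable quadratic with leading coefficient `H j j / 2`, and `H j j ≤ λ_max(H) ≤ λ` because a
diagonal entry is a convex combination of the eigenvalues. For such a quadratic, whichever
endpoint of the grid cell `[u₀, u₁]` containing the current value is better costs at most
`λ (u₁ - u₀)² / 8`; summing over the coordinates gives the bound.
-/

open Matrix Function Set

lemma update_eq_add_single_sub {ι G : Type*} [DecidableEq ι] [AddCommGroup G] (y : ι → G)
    (j : ι) (u : G) : update y j u = y + Pi.single j (u - y j) := by
  ext i
  rcases eq_or_ne i j with rfl | hij <;> simp [*]

lemma exists_lt_mem_Icc_of_mem_Icc {lo δ y : ℝ} {N : ℕ} (hN : 0 < N)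
    (hy : y ∈ Icc lo (lo + δ * N)) : ∃ i < N, y ∈ Icc (lo + δ * i) (lo + δ * (i + 1)) := by
  induction N, hN using Nat.le_induction with
  | base => exact ⟨0, one_pos, by simpa using hy⟩
  | succ N hN ih =>
    by_cases hyN : y ≤ lo + δ * N
    · obtain ⟨i, hi, hyi⟩ := ih ⟨hy.1, hyN⟩
      exact ⟨i, hi.trans N.lt_succ_self, hyi⟩
    · exact ⟨N, N.lt_succ_self, le_of_not_ge hyN, by simpa using hy.2⟩

lemma min_quadratic_le_of_nonpos_of_nonneg {A h lam a b : ℝ} (hh : h ≤ lam) (hlam : 0 ≤ lam)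
    (ha : a ≤ 0) (hb : 0 ≤ b) :
    min (A * a + h / 2 * a ^ 2) (A * b + h / 2 * b ^ 2) ≤ 1 / 8 * lam * (b - a) ^ 2 := by
  rcases (sub_nonneg.2 (ha.trans hb)).eq_or_lt with hab | hab
  · obtain rfl : a = 0 := by linarith
    obtain rfl : b = 0 := by linarith
    simp
  -- The `min` is at most the convex combination `(b φ(a) - a φ(b)) / (b - a) = -h a b / 2`.
  have hcomb : b * (A * a + h / 2 * a ^ 2) - a * (A * b + h / 2 * b ^ 2)
      = (b - a) * (h / 2 * -(a * b)) := by ring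
  have hprod : 0 ≤ -(a * b) := by nlinarith
  have hamgm : -(a * b) ≤ (b - a) ^ 2 / 4 := by nlinarith [sq_nonneg (a + b)]
  have hmid : h / 2 * -(a * b) ≤ 1 / 8 * lam * (b - a) ^ 2 := by nlinarith
  have hmin : (b - a) * min (A * a + h / 2 * a ^ 2) (A * b + h / 2 * b ^ 2)
      ≤ (b - a) * (h / 2 * -(a * b)) := by
    rw [← hcomb]
    nlinarith [min_le_left (A * a + h / 2 * a ^ 2) (A * b + h / 2 * b ^ 2),
      min_le_right (A * a + h / 2 * a ^ 2) (A * b + h / 2 * b ^ 2)]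
  exact (le_of_mul_le_mul_left hmin hab).trans hmid

lemma dotProduct_mulVec_add_single {ι : Type*} [Fintype ι] [DecidableEq ι]
    {H : Matrix ι ι ℝ} (hH : H.IsSymm) (w : ι → ℝ) (j : ι) (c : ℝ) :
    (w + Pi.single j c) ⬝ᵥ H *ᵥ (w + Pi.single j c)
      = w ⬝ᵥ H *ᵥ w + 2 * c * (H *ᵥ w) j + H j j * c ^ 2 := by
  have hcross : w ⬝ᵥ H *ᵥ Pi.single j c = c * (H *ᵥ w) j := by
    rw [dotProduct_mulVec, ← hH.eq, vecMul_transpose, dotProduct_single, mul_comm, hH.eq]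
  rw [mulVec_add, dotProduct_add, add_dotProduct, add_dotProduct, hcross,
    single_dotProduct, mulVec_single, single_dotProduct]
  simp only [Pi.smul_apply, col_apply, op_smul_eq_mul]
  ring

lemma Matrix.IsHermitian.diag_le_iSup_eigenvalues {n : Type*} [Fintype n] [DecidableEq n]
    {A : Matrix n n ℝ} (hA : A.IsHermitian) (j : n) : A j j ≤ ⨆ i, hA.eigenvalues i := by
  set U : Matrix n n ℝ := (hA.eigenvectorUnitary : Matrix n n ℝ)
  have hdiag : A j j = ∑ i, hA.eigenvalues i * U j i ^ 2 := by
    conv_lhs => rw [hA.spectral_theorem, Unitary.conjStarAlgAut_apply]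
    rw [mul_apply]
    refine Finset.sum_congr rfl fun i _ => ?_
    simp [mul_diagonal, U]
    ring
  have hrow : ∑ i, U j i ^ 2 = 1 := by
    have := congrFun (congrFun (mem_unitaryGroup_iff.1 hA.eigenvectorUnitary.2) j) j
    simpa [mul_apply, sq, U] using this
  calc A j j = ∑ i, hA.eigenvalues i * U j i ^ 2 := hdiag
    _ ≤ ∑ i, (⨆ k, hA.eigenvalues k) * U j i ^ 2 := by
      gcongr with i
      exact le_ciSup (Finite.bddAbove (finite_range _)) i
    _ = ⨆ i, hA.eigenvalues i := by rw [← Finset.mul_sum, hrow, mul_one]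

lemma exists_le_add_sum_of_forall_update {ι α β : Type*} [Fintype ι] [DecidableEq ι]
    [Nonempty β] (f : (ι → α) → ℝ) (B : ι → Set α) (G : ι → β → α) (c : ι → ℝ)
    (hstep : ∀ y j, y j ∈ B j → ∃ m, f (update y j (G j m)) ≤ f y + c j)
    (y : ι → α) (hy : ∀ k, y k ∈ B k) : ∃ n : ι → β, f (fun k => G k (n k)) ≤ f y + ∑ k, c k := by
  suffices h : ∀ S : Finset ι, ∀ y : ι → α, (∀ k ∈ S, y k ∈ B k) →
      ∃ n : ι → β, f (fun k => if k ∈ S then G k (n k) else y k) ≤ f y + ∑ k ∈ S, c k by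
    simpa using h Finset.univ y fun k _ => hy k
  intro S
  induction S using Finset.induction_on with
  | empty => exact fun y _ => ⟨Classical.arbitrary _, by simp⟩
  | @insert j S hj ih =>
    intro y hy
    obtain ⟨m, hm⟩ := hstep y j (hy j (Finset.mem_insert_self j S))
    obtain ⟨n, hn⟩ := ih (update y j (G j m)) fun k hk => by
      rw [update_of_ne (ne_of_mem_of_not_mem hk hj)]
      exact hy k (Finset.mem_insert_of_mem hk)
    refine ⟨update n j m, ?_⟩
    have hpoint : (fun k => if k ∈ insert j S then G k (update n j m k) else y k)
        = fun k => if k ∈ S then G k (n k) else update y j (G j m) k := by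
      ext k
      rcases eq_or_ne k j with rfl | hkj
      · simp [hj]
      · simp [hkj]
    rw [hpoint, Finset.sum_insert hj]
    linarith

section QuadraticModel

variable {ι : Type*} [Fintype ι] [DecidableEq ι]

noncomputable def quadraticModel (f0 : ℝ) (g : ι → ℝ) (H : Matrix ι ι ℝ) (x0 x : ι → ℝ) : ℝ :=
  f0 + g ⬝ᵥ (x - x0) + (1 / 2) * ((x - x0) ⬝ᵥ H *ᵥ (x - x0))

variable {f0 : ℝ} {g x0 : ι → ℝ} {H : Matrix ι ι ℝ}

lemma quadraticModel_update (hH : H.IsSymm) (y : ι → ℝ) (j : ι) (u : ℝ) :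
    quadraticModel f0 g H x0 (update y j u) = quadraticModel f0 g H x0 y
      + (g j + (H *ᵥ (y - x0)) j) * (u - y j) + H j j / 2 * (u - y j) ^ 2 := by
  have hshift : update y j u - x0 = (y - x0) + Pi.single j (u - y j) := by
    rw [update_eq_add_single_sub, add_sub_right_comm]
  simp only [quadraticModel, hshift, dotProduct_mulVec_add_single hH, dotProduct_add,
    dotProduct_single]
  ring

lemma exists_quadraticModel_update_grid_le (hH : H.IsSymm) {lam : ℝ} (hdiag : ∀ k, H k k ≤ lam)
    (hlam : 0 ≤ lam) {N : ℕ} (hN : 0 < N) {lo δ : ℝ} (y : ι → ℝ) (j : ι)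
    (hy : y j ∈ Icc lo (lo + δ * N)) :
    ∃ m : Fin (N + 1), quadraticModel f0 g H x0 (update y j (lo + δ * (m : ℕ)))
      ≤ quadraticModel f0 g H x0 y + 1 / 8 * lam * δ ^ 2 := by
  obtain ⟨i, hiN, hlo, hhi⟩ := exists_lt_mem_Icc_of_mem_Icc hN hy
  have hmin := min_quadratic_le_of_nonpos_of_nonneg (A := g j + (H *ᵥ (y - x0)) j) (hdiag j) hlam
    (sub_nonpos.2 hlo) (sub_nonneg.2 hhi)
  rw [show lo + δ * (i + 1) - y j - (lo + δ * i - y j) = δ by ring] at hmin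
  rcases min_le_iff.1 hmin with h | h
  · refine ⟨⟨i, by omega⟩, ?_⟩
    rw [quadraticModel_update hH]
    linarith
  · refine ⟨⟨i + 1, by omega⟩, ?_⟩
    rw [quadraticModel_update hH]
    push_cast
    linarith

end QuadraticModel

theorem discretisation_error_bound_general {K : ℕ} (f0 : ℝ) (g : Fin K → ℝ)
    (H : Matrix (Fin K) (Fin K) ℝ) (hH : H.IsHermitian)
    (x0 r : Fin K → ℝ) (N : ℕ) (hN : 0 < N)
    (δ : Fin K → ℝ) (hδ : δ = fun k => 2 * r k / N)
    (q : (Fin K → ℝ) → ℝ)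
    (hq : q = fun x => f0 + g ⬝ᵥ (x - x0) + (1 / 2) * ((x - x0) ⬝ᵥ H *ᵥ (x - x0)))
    (lam : ℝ) (hlam : lam = max (⨆ k, hH.eigenvalues k) 0)
    (x : Fin K → ℝ) (hx : ∀ k, |x k - x0 k| ≤ r k) :
    (⨅ n : Fin K → Fin (N + 1), q fun k => x0 k - r k + δ k * (n k : ℕ)) -
      (1 / 8) * lam * (∑ k, δ k ^ 2) ≤ q x := by
  obtain rfl : q = quadraticModel f0 g H x0 := hq
  have hdiag (k : Fin K) : H k k ≤ lam :=
    hlam ▸ (hH.diag_le_iSup_eigenvalues k).trans (le_max_left _ _)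
  have hlam0 : 0 ≤ lam := hlam ▸ le_max_right _ _
  have hbox (k : Fin K) : x k ∈ Icc (x0 k - r k) (x0 k - r k + δ k * N) := by
    have hwidth : δ k * N = 2 * r k := by
      rw [hδ]
      field_simp
    rw [hwidth]
    constructor <;> linarith [abs_le.1 (hx k)]
  obtain ⟨n, hn⟩ := exists_le_add_sum_of_forall_update (quadraticModel f0 g H x0) _ _ _
    (fun y j hy => exists_quadraticModel_update_grid_le (isHermitian_iff_isSymm.1 hH) hdiag hlam0
      hN y j hy) x hbox
  calc _ ≤ quadraticModel f0 g H x0 (fun k => x0 k - r k + δ k * (n k : ℕ))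
        - 1 / 8 * lam * ∑ k, δ k ^ 2 :=
      sub_le_sub_right (ciInf_le (Finite.bddBelow (finite_range _)) n) _
    _ ≤ _ := by
      rw [Finset.mul_sum]
      linarith

/-- Discretisation-error bound: the minimum of the quadratic model `q` over the
hyper-rectangular trust region is at least the minimum of `q` over the grid of
spacing `δ = 2r/N` minus `(1/8) λ δᵀδ`, where `λ = max(λ_max(H₀), 0)`. -/
theorem discretisation_error_bound {K : ℕ} (f0 : ℝ) (g : Fin K → ℝ)
    (H : Matrix (Fin K) (Fin K) ℝ) (hH : H.IsHermitian)
    (x0 r : Fin K → ℝ) (hr : ∀ k, 0 ≤ r k) (N : ℕ) (hN : 0 < N)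
    (δ : Fin K → ℝ) (hδ : δ = fun k => 2 * r k / N)
    (q : (Fin K → ℝ) → ℝ)
    (hq : q = fun x => f0 + g ⬝ᵥ (x - x0) + (1 / 2) * ((x - x0) ⬝ᵥ H *ᵥ (x - x0)))
    (lam : ℝ) (hlam : lam = max (⨆ k, hH.eigenvalues k) 0)
    (x : Fin K → ℝ) (hx : ∀ k, |x k - x0 k| ≤ r k) :
    (⨅ n : Fin K → Fin (N + 1), q fun k => x0 k - r k + δ k * (n k : ℕ)) -
      (1 / 8) * lam * (∑ k, δ k ^ 2) ≤ q x :=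
  discretisation_error_bound_general f0 g H hH x0 r N hN δ hδ q hq lam hlam x hx
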